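/- For every short game G, the game values of G → ∗ → ∗ → ∗ and G → ∗ are equal. -/

import Mathlib

universe u

namespace SetTheory

/-- Pre-games (removed from Mathlib; restated with their old meaning). -/
inductive PGame : Type (u + 1)
  | mk : ∀ α β : Type u, (α → PGame) → (β → PGame) → PGame

namespace PGame

def LeftMoves : PGame → Type u
  | mk l _ _ _ => l

def RightMoves : PGame → Type u
  | mk _ r _ _ => r

def moveLeft : ∀ g : PGame, LeftMoves g → PGame
  | mk _ _ L _ => L

def moveRight : ∀ g : PGame, RightMoves g → PGame
  | mk _ _ _ R => R

instance : Zero PGame :=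
  ⟨⟨PEmpty, PEmpty, PEmpty.elim, PEmpty.elim⟩⟩

def neg : PGame → PGame
  | ⟨l, r, L, R⟩ => ⟨r, l, fun i => neg (R i), fun i => neg (L i)⟩

instance : Neg PGame :=
  ⟨neg⟩

def addAux (xl xr : Type u) (IHL : xl → PGame → PGame) (IHR : xr → PGame → PGame) :
    PGame → PGame
  | mk yl yr yL yR =>
    mk (xl ⊕ yl) (xr ⊕ yr)
      (Sum.elim (fun i => IHL i (mk yl yr yL yR)) (fun j => addAux xl xr IHL IHR (yL j)))
      (Sum.elim (fun i => IHR i (mk yl yr yL yR)) (fun j => addAux xl xr IHL IHR (yR j)))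

def add : PGame → PGame → PGame
  | mk xl xr xL xR => addAux xl xr (fun i => add (xL i)) (fun i => add (xR i))

instance : Add PGame :=
  ⟨add⟩

instance : Sub PGame :=
  ⟨fun x y => x + -y⟩

def star : PGame :=
  ⟨PUnit, PUnit, fun _ => 0, fun _ => 0⟩

/-- Auxiliary: the pair `(x ≤ y, x ⧏ y)` for fixed `x` by recursion on `y`. -/
def leLfAux (xl xr : Type u) (IHL : xl → PGame → Prop × Prop)
    (IHR : xr → PGame → Prop × Prop) : PGame → Prop × Prop
  | mk yl yr yL yR =>
    ((∀ i, (IHL i (mk yl yr yL yR)).2) ∧ ∀ j, (leLfAux xl xr IHL IHR (yR j)).2,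
     (∃ i, (leLfAux xl xr IHL IHR (yL i)).1) ∨ ∃ j, (IHR j (mk yl yr yL yR)).1)

/-- The pair `(x ≤ y, x ⧏ y)`. -/
def leLf : PGame → PGame → Prop × Prop
  | mk xl xr xL xR => leLfAux xl xr (fun i => leLf (xL i)) (fun j => leLf (xR j))

instance : LE PGame :=
  ⟨fun x y => (leLf x y).1⟩

def Equiv (x y : PGame) : Prop :=
  x ≤ y ∧ y ≤ x

instance : HasEquiv PGame :=
  ⟨Equiv⟩

class inductive Short : PGame.{u} → Type (u + 1)
  | mk :
    ∀ {α β : Type u} {L : α → PGame.{u}} {R : β → PGame.{u}} (_ : ∀ i : α, Short (L i))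
      (_ : ∀ j : β, Short (R j)) [Fintype α] [Fintype β], Short ⟨α, β, L, R⟩

end PGame

end SetTheory

open SetTheory

open scoped PGame

namespace SeqCompound

open Classical in
/-- The sequential compound `G → H` of two pregames. -/
noncomputable def seqc : PGame → PGame → PGame
  | PGame.mk α β L R, H =>
    if Nonempty α then
      if Nonempty β then
        PGame.mk α β (fun a => seqc (L a) H) (fun b => seqc (R b) H)
      else
        PGame.mk α H.RightMoves (fun a => seqc (L a) H) H.moveRight
    else
      if Nonempty β then
        PGame.mk H.LeftMoves β H.moveLeft (fun b => seqc (R b) H)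
      else H

/-- A pregame is dicotic (all-small) if in every subposition,
Left has an option iff Right has an option. -/
def Dicotic : PGame → Prop
  | PGame.mk α β L R =>
    (Nonempty α ↔ Nonempty β) ∧ (∀ a, Dicotic (L a)) ∧ (∀ b, Dicotic (R b))

/-- The canonical nonnegative integer game `{n-1 | }`. -/
def intGame : ℕ → PGame
  | 0 => 0
  | n + 1 => PGame.mk PUnit PEmpty (fun _ => intGame n) PEmpty.elim

/-- `upSum k` is the disjunctive sum `↑¹ + ↑² + ⋯ + ↑ᵏ`. -/
def upSum : ℕ → PGame
  | 0 => 0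
  | k + 1 => upSum k +
      PGame.mk PUnit PUnit (fun _ => 0) (fun _ => PGame.star - upSum k)

/-- `upPow k` is the game `↑^(k+1) = {0 | ∗ - (↑¹ + ⋯ + ↑ᵏ)}`. -/
def upPow (k : ℕ) : PGame :=
  PGame.mk PUnit PUnit (fun _ => 0) (fun _ => PGame.star - upSum k)

/-- Sequential compound of a list of games. -/
noncomputable def seqList : List PGame → PGame
  | [] => 0
  | G :: l => seqc G (seqList l)

end SeqCompound

/-!
A sequential compound `G → H` differs from `G` only at the positions of `G` where one player
has run out of moves; there play continues in `H`, using only the options of `H`. Hence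
`G → H ≈ G → H'` as soon as the options of `H` and `H'` match up to equivalence. Now
`∗ → (∗ → ∗) = {∗ → ∗ | ∗ → ∗}` and `∗ → ∗ = {∗ | ∗} ≈ 0`, so its options match those of `∗`.
-/

namespace SetTheory.PGame

theorem leLf_mk {xl xr : Type u} (xL : xl → PGame) (xR : xr → PGame) (y : PGame) :
    leLf (mk xl xr xL xR) y = leLfAux xl xr (fun i => leLf (xL i)) (fun j => leLf (xR j)) y := by
  rw [leLf]

theorem leLfAux_mk (xl xr : Type u) (IHL : xl → PGame → Prop × Prop)
    (IHR : xr → PGame → Prop × Prop) {yl yr : Type u} (yL : yl → PGame) (yR : yr → PGame) :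
    leLfAux xl xr IHL IHR (mk yl yr yL yR) =
      ((∀ i, (IHL i (mk yl yr yL yR)).2) ∧ ∀ j, (leLfAux xl xr IHL IHR (yR j)).2,
        (∃ i, (leLfAux xl xr IHL IHR (yL i)).1) ∨ ∃ j, (IHR j (mk yl yr yL yR)).1) := by
  rw [leLfAux]

theorem lf_mk_of_le_moveLeft (x : PGame) {yl yr : Type u} (yL : yl → PGame) (yR : yr → PGame)
    (i : yl) (h : x ≤ yL i) : (leLf x (mk yl yr yL yR)).2 := by
  cases x with
  | mk xl xr xL xR =>
    change (leLf _ _).1 at h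
    rw [leLf_mk] at h ⊢
    rw [leLfAux_mk]
    exact Or.inl ⟨i, h⟩

theorem mk_lf_of_moveRight_le {xl xr : Type u} (xL : xl → PGame) (xR : xr → PGame) (y : PGame)
    (j : xr) (h : xR j ≤ y) : (leLf (mk xl xr xL xR) y).2 := by
  cases y with
  | mk yl yr yL yR =>
    rw [leLf_mk, leLfAux_mk]
    exact Or.inr ⟨j, h⟩

theorem mk_le_mk {xl xr : Type u} {xL : xl → PGame} {xR : xr → PGame}
    {yl yr : Type u} {yL : yl → PGame} {yR : yr → PGame}
    (hL : ∀ i, (leLf (xL i) (mk yl yr yL yR)).2) (hR : ∀ j, (leLf (mk xl xr xL xR) (yR j)).2) :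
    mk xl xr xL xR ≤ mk yl yr yL yR := by
  change (leLf _ _).1
  rw [leLf_mk, leLfAux_mk]
  refine ⟨hL, fun j => ?_⟩
  simpa only [leLf_mk] using hR j

theorem zero_le_zero : (0 : PGame) ≤ 0 :=
  mk_le_mk (fun i => PEmpty.elim i) (fun j => PEmpty.elim j)

theorem equiv_of_moves_equiv {x y : PGame} (eL : x.LeftMoves ≃ y.LeftMoves)
    (eR : x.RightMoves ≃ y.RightMoves) (hL : ∀ i, x.moveLeft i ≈ y.moveLeft (eL i))
    (hR : ∀ j, x.moveRight j ≈ y.moveRight (eR j)) : x ≈ y := by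
  cases x with
  | mk xl xr xL xR =>
  cases y with
  | mk yl yr yL yR =>
  constructor
  · refine mk_le_mk (fun i => lf_mk_of_le_moveLeft _ _ _ (eL i) (hL i).1) (fun j => ?_)
    obtain ⟨j, rfl⟩ := eR.surjective j
    exact mk_lf_of_moveRight_le _ _ _ j (hR j).1
  · refine mk_le_mk (fun i => ?_) (fun j => mk_lf_of_moveRight_le _ _ _ (eR j) (hR j).2)
    obtain ⟨i, rfl⟩ := eL.surjective i
    exact lf_mk_of_le_moveLeft _ _ _ i (hL i).2

end SetTheory.PGame

namespace SeqCompound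

open PGame

theorem seqc_zero (H : PGame) : seqc 0 H = H := by
  change seqc (mk PEmpty PEmpty _ _) H = H
  rw [seqc]
  simp

theorem seqc_star (H : PGame) : seqc star H = mk PUnit PUnit (fun _ => H) (fun _ => H) := by
  change seqc (mk PUnit PUnit _ _) H = _
  rw [seqc, if_pos ⟨PUnit.unit⟩, if_pos ⟨PUnit.unit⟩]
  simp only [seqc_zero]

theorem seqc_star_star_equiv_zero : seqc star star ≈ 0 := by
  rw [seqc_star]
  have star_lf_zero : (leLf star 0).2 :=
    mk_lf_of_moveRight_le (fun _ => 0) (fun _ => 0) 0 PUnit.unit zero_le_zero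
  have zero_lf_star : (leLf 0 star).2 :=
    lf_mk_of_le_moveLeft 0 (fun _ => 0) (fun _ => 0) PUnit.unit zero_le_zero
  exact ⟨mk_le_mk (fun _ => star_lf_zero) (fun j => PEmpty.elim j),
    mk_le_mk (fun i => PEmpty.elim i) (fun _ => zero_lf_star)⟩

theorem seqc_congr_right {H H' : PGame} (eL : H.LeftMoves ≃ H'.LeftMoves)
    (eR : H.RightMoves ≃ H'.RightMoves) (hL : ∀ i, H.moveLeft i ≈ H'.moveLeft (eL i))
    (hR : ∀ j, H.moveRight j ≈ H'.moveRight (eR j)) (G : PGame) :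
    seqc G H ≈ seqc G H' := by
  induction G with
  | mk α β L R ihL ihR =>
    rw [seqc, seqc]
    by_cases hα : Nonempty α <;> by_cases hβ : Nonempty β <;> simp only [hα, hβ, if_true, if_false]
    · exact equiv_of_moves_equiv (.refl α) (.refl β) ihL ihR
    · exact equiv_of_moves_equiv (.refl α) eR ihL hR
    · exact equiv_of_moves_equiv eL (.refl β) hL ihR
    · exact equiv_of_moves_equiv eL eR hL hR

end SeqCompound

open SeqCompound in
theorem seqc_three_stars_general (G : PGame) :
    seqc G (seqc PGame.star (seqc PGame.star PGame.star)) ≈ seqc G PGame.star := by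
  rw [seqc_star (seqc PGame.star PGame.star)]
  refine seqc_congr_right ?_ ?_ ?_ ?_ G
  exacts [.refl PUnit, .refl PUnit, fun _ => seqc_star_star_equiv_zero,
    fun _ => seqc_star_star_equiv_zero]

open SeqCompound in
/-- `G → ∗ → ∗ → ∗ = G → ∗` as game values. -/
theorem seqc_three_stars (G : PGame) [PGame.Short G] :
    seqc G (seqc PGame.star (seqc PGame.star PGame.star)) ≈ seqc G PGame.star :=
  seqc_three_stars_general G
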